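/- arXiv:2205.05564 — 3 statements merged into one kernel-verified Lean document; each statement's English description precedes it below -/
import Mathlib

section
/- Let k ≥ 1 be an integer, A a finite set, f_max > 0, and f : A → [0, f_max] a function with f(A) := ∑_{a∈A} f(a) > 0. Then the sum over all k-tuples (a_1,…,a_k) of distinct elements of A of the product ∏_{i∈[k]} f(a_i) equals (1 ± k² f_max / f(A)) · f(A)^k, i.e. it lies between (1 − k² f_max/f(A)) f(A)^k and (1 + k² f_max/f(A)) f(A)^k. -/
/-!
Summing `∏ f (g l)` over all of `A ^ k` gives `f(A) ^ k`. A non-injective tuple has `g i = g j`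
for some `i ≠ j`, and the tuples with `g i = g j` contribute at most `f_max · f(A) ^ (k - 1)`,
since coordinate `i` only repeats coordinate `j` and its factor is at most `f_max`. A union bound
over the fewer than `k ^ 2` pairs `(i, j)` bounds the non-injective part by
`k ^ 2 f_max f(A) ^ (k - 1)`.
-/
open Finset Function Fintype

namespace Finset

variable {ι β M : Type*} [DecidableEq β] [AddCommMonoid M] [PartialOrder M] [IsOrderedAddMonoid M]

theorem sum_biUnion_le_sum_sum {s : Finset ι} {t : ι → Finset β} {f : β → M}
    (hf : ∀ b ∈ s.biUnion t, 0 ≤ f b) :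
    ∑ b ∈ s.biUnion t, f b ≤ ∑ i ∈ s, ∑ b ∈ t i, f b := by
  have himage : s.biUnion t = (s.sigma t).image Sigma.snd := by
    ext b; simp [mem_biUnion]
  rw [sum_sigma', himage]
  exact sum_image_le_of_nonneg (by rwa [← himage])

end Finset

section

variable {ι α : Type*} [Fintype ι] [DecidableEq ι] [DecidableEq α] {A : Finset α} {f : α → ℝ}
  {M : ℝ}

theorem sum_piFinset_filter_apply_eq_le (hf0 : ∀ a ∈ A, 0 ≤ f a) (hM : 0 ≤ M)
    (hfM : ∀ a ∈ A, f a ≤ M) {i j : ι} (hij : i ≠ j) :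
    ∑ g ∈ piFinset (fun _ : ι ↦ A) with g i = g j, ∏ l, f (g l) ≤
      M * (∑ a ∈ A, f a) ^ (card ι - 1) := by
  set P := {g ∈ piFinset (fun _ : ι ↦ A) | g i = g j}
  let restrict : (ι → α) → ({l // l ≠ i} → α) := fun g l ↦ g l
  -- on `P` the coordinate `i` is a copy of the coordinate `j`, so forgetting it loses nothing
  have hinj : Set.InjOn restrict P := by
    intro g hg g' hg' hgg'
    simp only [P, coe_filter, Set.mem_ofPred_eq] at hg hg'
    funext l
    obtain rfl | hl := eq_or_ne l i
    · rw [hg.2, hg'.2]; exact congrFun hgg' ⟨j, hij.symm⟩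
    · exact congrFun hgg' ⟨l, hl⟩
  have hmaps : P.image restrict ⊆ piFinset fun _ : {l // l ≠ i} ↦ A := by
    refine image_subset_iff.2 fun g hg ↦ mem_piFinset.2 fun l ↦ ?_
    exact mem_piFinset.1 (mem_filter.1 hg).1 l
  calc ∑ g ∈ P, ∏ l, f (g l)
      ≤ ∑ g ∈ P, M * ∏ l, f (restrict g l) := by
        refine sum_le_sum fun g hg ↦ ?_
        have hgA : ∀ l, g l ∈ A := mem_piFinset.1 (mem_filter.1 hg).1
        rw [prod_eq_mul_prod_subtype_ne _ i]
        exact mul_le_mul_of_nonneg_right (hfM _ (hgA i)) (prod_nonneg fun l _ ↦ hf0 _ (hgA l))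
    _ = M * ∑ h ∈ P.image restrict, ∏ l, f (h l) := by rw [sum_image hinj, mul_sum]
    _ ≤ M * ∑ h ∈ piFinset (fun _ : {l // l ≠ i} ↦ A), ∏ l, f (h l) := by
        gcongr
        exact fun h hh _ ↦ prod_nonneg fun l _ ↦ hf0 _ (mem_piFinset.1 hh l)
    _ = M * (∑ a ∈ A, f a) ^ (card ι - 1) := by simp [sum_prod_piFinset]

theorem sum_piFinset_filter_not_injective_le (hf0 : ∀ a ∈ A, 0 ≤ f a) (hM : 0 ≤ M)
    (hfM : ∀ a ∈ A, f a ≤ M) :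
    ∑ g ∈ piFinset (fun _ : ι ↦ A) with ¬ Injective g, ∏ l, f (g l) ≤
      (card ι : ℝ) ^ 2 * M * (∑ a ∈ A, f a) ^ (card ι - 1) := by
  set diagonals := fun p : ι × ι ↦ {g ∈ piFinset (fun _ : ι ↦ A) | g p.1 = g p.2}
  have hcover : {g ∈ piFinset (fun _ : ι ↦ A) | ¬ Injective g} ⊆
      (univ : Finset ι).offDiag.biUnion diagonals := by
    intro g hg
    obtain ⟨hgA, hg⟩ := mem_filter.1 hg
    obtain ⟨i, j, hgij, hij⟩ := not_injective_iff.1 hg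
    exact mem_biUnion.2 ⟨(i, j), by simpa using hij, mem_filter.2 ⟨hgA, hgij⟩⟩
  have hnonneg : ∀ g ∈ (univ : Finset ι).offDiag.biUnion diagonals, 0 ≤ ∏ l, f (g l) := by
    intro g hg
    have hgA := biUnion_subset.2 (fun _ _ ↦ filter_subset _ _) hg
    exact prod_nonneg fun l _ ↦ hf0 _ (mem_piFinset.1 hgA l)
  have hcard : ((univ : Finset ι).offDiag.card : ℝ) ≤ (card ι : ℝ) ^ 2 := by
    rw [offDiag_card, card_univ, sq]
    exact_mod_cast Nat.sub_le _ _
  calc _ ≤ ∑ g ∈ (univ : Finset ι).offDiag.biUnion diagonals, ∏ l, f (g l) :=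
        sum_le_sum_of_subset_of_nonneg hcover fun g hg _ ↦ hnonneg g hg
    _ ≤ ∑ p ∈ (univ : Finset ι).offDiag, ∑ g ∈ diagonals p, ∏ l, f (g l) :=
        sum_biUnion_le_sum_sum hnonneg
    _ ≤ ∑ _p ∈ (univ : Finset ι).offDiag, M * (∑ a ∈ A, f a) ^ (card ι - 1) :=
        sum_le_sum fun p hp ↦ sum_piFinset_filter_apply_eq_le hf0 hM hfM (mem_offDiag.1 hp).2.2
    _ ≤ _ := by
        rw [sum_const, nsmul_eq_mul, mul_assoc]
        gcongr
        exact mul_nonneg hM (pow_nonneg (sum_nonneg hf0) _)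

theorem abs_sum_piFinset_filter_injective_sub_pow_le (hf0 : ∀ a ∈ A, 0 ≤ f a) (hM : 0 ≤ M)
    (hfM : ∀ a ∈ A, f a ≤ M) :
    |∑ g ∈ piFinset (fun _ : ι ↦ A) with Injective g, ∏ l, f (g l) - (∑ a ∈ A, f a) ^ card ι| ≤
      (card ι : ℝ) ^ 2 * M * (∑ a ∈ A, f a) ^ (card ι - 1) := by
  have htotal := sum_filter_add_sum_filter_not (piFinset fun _ : ι ↦ A) Injective
    fun g ↦ ∏ l, f (g l)
  rw [sum_prod_piFinset, prod_const, card_univ] at htotal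
  have hnonneg : 0 ≤ ∑ g ∈ piFinset (fun _ : ι ↦ A) with ¬ Injective g, ∏ l, f (g l) :=
    sum_nonneg fun g hg ↦ prod_nonneg fun l _ ↦ hf0 _ (mem_piFinset.1 (mem_filter.1 hg).1 l)
  rw [abs_sub_comm, abs_of_nonneg (by linarith)]
  linarith [sum_piFinset_filter_not_injective_le hf0 hM hfM (ι := ι)]

end

theorem stmt_0_general {α : Type*} [DecidableEq α] [Fintype α] (k : ℕ)
    (A : Finset α) (fmax : ℝ) (hfmax : 0 < fmax) (f : α → ℝ)
    (hf0 : ∀ a ∈ A, 0 ≤ f a) (hf1 : ∀ a ∈ A, f a ≤ fmax)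
    (hfA : 0 < ∑ a ∈ A, f a) :
    (1 - (k : ℝ) ^ 2 * fmax / ∑ a ∈ A, f a) * (∑ a ∈ A, f a) ^ k ≤
      (∑ g ∈ (Finset.univ : Finset (Fin k → α)).filter
          (fun g => Function.Injective g ∧ ∀ i, g i ∈ A), ∏ i, f (g i)) ∧
    (∑ g ∈ (Finset.univ : Finset (Fin k → α)).filter
          (fun g => Function.Injective g ∧ ∀ i, g i ∈ A), ∏ i, f (g i)) ≤
      (1 + (k : ℝ) ^ 2 * fmax / ∑ a ∈ A, f a) * (∑ a ∈ A, f a) ^ k := by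
  set S := ∑ a ∈ A, f a
  have hfilter : (univ : Finset (Fin k → α)).filter (fun g ↦ Injective g ∧ ∀ i, g i ∈ A) =
      {g ∈ piFinset (fun _ : Fin k ↦ A) | Injective g} := by
    ext g; simp [and_comm]
  have herror : (k : ℝ) ^ 2 * fmax * S ^ (k - 1) = (k : ℝ) ^ 2 * fmax / S * S ^ k := by
    rcases k with _ | k
    · simp
    · rw [Nat.add_sub_cancel]
      field_simp
      ring
  have hbound := abs_sum_piFinset_filter_injective_sub_pow_le hf0 hfmax.le hf1 (ι := Fin k)
  rw [Fintype.card_fin, herror, ← hfilter] at hbound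
  obtain ⟨hlower, hupper⟩ := abs_le.1 hbound
  constructor <;> linarith

theorem stmt_0 {α : Type*} [DecidableEq α] [Fintype α] (k : ℕ) (hk : 1 ≤ k)
    (A : Finset α) (fmax : ℝ) (hfmax : 0 < fmax) (f : α → ℝ)
    (hf0 : ∀ a ∈ A, 0 ≤ f a) (hf1 : ∀ a ∈ A, f a ≤ fmax)
    (hfA : 0 < ∑ a ∈ A, f a) :
    (1 - (k : ℝ) ^ 2 * fmax / ∑ a ∈ A, f a) * (∑ a ∈ A, f a) ^ k ≤
      (∑ g ∈ (Finset.univ : Finset (Fin k → α)).filter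
          (fun g => Function.Injective g ∧ ∀ i, g i ∈ A), ∏ i, f (g i)) ∧
    (∑ g ∈ (Finset.univ : Finset (Fin k → α)).filter
          (fun g => Function.Injective g ∧ ∀ i, g i ∈ A), ∏ i, f (g i)) ≤
      (1 + (k : ℝ) ^ 2 * fmax / ∑ a ∈ A, f a) * (∑ a ∈ A, f a) ^ k :=
  stmt_0_general k A fmax hfmax f hf0 hf1 hfA
end

section
/- Fix integers k ≥ 2, ℓ ≥ 2, reals Γ ≥ 1, d > 0, n > 0, and nonnegative reals Δ_2,…,Δ_ℓ with ∑_{j=2}^{ℓ} Δ_j/d^{j−1} ≤ Γ. Define for x ∈ [0, n/k]: p_V(x) = 1 − kx/n, p_M(x) = kx/(dn), Γ̂(x) = ∑_{j=2}^{ℓ} Δ_j · p_M(x)^{j−1}, d̂(x) = d·p_V(x)^{k−1}·exp(−Γ̂(x)), ĥ(x) = (n/k)·p_V(x)·d̂(x), and ĉ(x) = ∑_{j=1}^{ℓ−1} Δ_{j+1} · j · (p_V(x)^k exp(−Γ̂(x))) · p_M(x)^{j−1}. Then for all x ∈ [0, (1−μ)n/k] with μ ∈ (0,1], (ĉ(x)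 + d̂(x))/ĥ(x) ≤ 2kΓ/(n·p_V(x)). -/
/-!
Write `P = 1 - kx/n` and `E = exp(-Γ̂(x))`, so that `p_M(x) = (1 - P)/d`. The `j`-th summand of `ĉ`
is `(Δ_{j+1}/d^{j-1}) · j P (1-P)^{j-1} · P^{k-1} E`, and `j P (1-P)^{j-1} ≤ (P + (1-P))^j = 1` is a
single term of a binomial expansion. Hence `ĉ ≤ Γ d P^{k-1} E = Γ d̂`, so `ĉ + d̂ ≤ 2Γ d̂`, and
dividing by `ĥ = (n/k) P d̂` gives the bound.
-/

open Finset

theorem natCast_mul_mul_pow_pred_le_add_pow {R : Type*} [CommSemiring R] [PartialOrder R]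
    [IsOrderedRing R] {a b : R} (ha : 0 ≤ a) (hb : 0 ≤ b) (j : ℕ) :
    j * a * b ^ (j - 1) ≤ (a + b) ^ j := by
  rcases Nat.eq_zero_or_pos j with rfl | hj
  · simp
  rw [add_pow]
  convert single_le_sum (f := fun m ↦ a ^ m * b ^ (j - m) * j.choose m)
    (fun m _ ↦ by positivity) (mem_range.mpr (by omega : 1 < j + 1)) using 1
  simp only [pow_one, Nat.choose_one_right]
  ring

theorem sum_Icc_one_pred_add_one {M : Type*} [AddCommMonoid M] (f : ℕ → M) (ℓ : ℕ) :
    ∑ j ∈ Icc 1 (ℓ - 1), f (j + 1) = ∑ j ∈ Icc 2 ℓ, f j := by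
  cases ℓ with
  | zero => rfl
  | succ m => rw [Nat.add_sub_cancel, ← map_add_right_Icc 1 m 1, sum_map]; rfl

theorem sum_mul_natCast_mul_pow_pred_le {ℓ : ℕ} {Γ d P : ℝ} (hd : 0 < d) (hP0 : 0 ≤ P)
    (hP1 : P ≤ 1) {Δ : ℕ → ℝ} (hΔ : ∀ j ∈ Icc 2 ℓ, 0 ≤ Δ j)
    (hsum : ∑ j ∈ Icc 2 ℓ, Δ j / d ^ (j - 1) ≤ Γ) :
    ∑ j ∈ Icc 1 (ℓ - 1), Δ (j + 1) * j * P * ((1 - P) / d) ^ (j - 1) ≤ Γ * d := by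
  calc ∑ j ∈ Icc 1 (ℓ - 1), Δ (j + 1) * j * P * ((1 - P) / d) ^ (j - 1)
      ≤ ∑ j ∈ Icc 1 (ℓ - 1), d * (Δ (j + 1) / d ^ (j + 1 - 1)) := by
        refine sum_le_sum fun j hj ↦ ?_
        obtain ⟨hj1, hjℓ⟩ := mem_Icc.mp hj
        have hΔj : 0 ≤ Δ (j + 1) := hΔ (j + 1) (mem_Icc.mpr ⟨by omega, by omega⟩)
        have hbinom : j * P * (1 - P) ^ (j - 1) ≤ 1 := by
          simpa using natCast_mul_mul_pow_pred_le_add_pow hP0 (sub_nonneg.mpr hP1) j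
        have hpow : d ^ (j + 1 - 1) = d * d ^ (j - 1) := by
          rw [← pow_succ']; congr 1; omega
        calc Δ (j + 1) * j * P * ((1 - P) / d) ^ (j - 1)
            = Δ (j + 1) / d ^ (j - 1) * (j * P * (1 - P) ^ (j - 1)) := by rw [div_pow]; ring
          _ ≤ Δ (j + 1) / d ^ (j - 1) * 1 := by gcongr
          _ = d * (Δ (j + 1) / d ^ (j + 1 - 1)) := by rw [hpow]; field_simp
    _ = d * ∑ j ∈ Icc 2 ℓ, Δ j / d ^ (j - 1) := by
        rw [← mul_sum, sum_Icc_one_pred_add_one (fun j ↦ Δ j / d ^ (j - 1))]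
    _ ≤ Γ * d := by rw [mul_comm Γ]; gcongr

theorem add_div_le_of_le_mul {Γ d n k P A S : ℝ} (hΓ : 1 ≤ Γ) (hd : 0 < d) (hn : 0 < n)
    (hk : 0 < k) (hP : 0 < P) (hA : 0 < A) (hS : S ≤ Γ * d) :
    (A * S + d * A) / (n / k * P * (d * A)) ≤ 2 * k * Γ / (n * P) := by
  rw [div_le_div_iff₀ (by positivity) (by positivity)]
  have hnum : A * S + d * A ≤ 2 * Γ * (d * A) := by
    nlinarith [mul_le_mul_of_nonneg_left hS hA.le, mul_le_mul_of_nonneg_right hΓ (by positivity : 0 ≤ d * A)]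
  calc (A * S + d * A) * (n * P) ≤ 2 * Γ * (d * A) * (n * P) := by gcongr
    _ = 2 * k * Γ * (n / k * P * (d * A)) := by field_simp

theorem stmt_3_general (k ℓ : ℕ) (hk : 2 ≤ k)
    (Γ d n μ x : ℝ) (hΓ : 1 ≤ Γ) (hd : 0 < d) (hn : 0 < n)
    (Δ : ℕ → ℝ) (hΔ : ∀ j ∈ Finset.Icc 2 ℓ, 0 ≤ Δ j)
    (hsum : ∑ j ∈ Finset.Icc 2 ℓ, Δ j / d ^ (j-1) ≤ Γ)
    (hμ : 0 < μ) (hx : 0 ≤ x) (hx' : x ≤ (1 - μ) * n / k) :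
    ((∑ j ∈ Finset.Icc 1 (ℓ-1), Δ (j+1) * (j : ℝ) *
        ((1 - k*x/n) ^ k *
          Real.exp (-(∑ j' ∈ Finset.Icc 2 ℓ, Δ j' * (k*x/(d*n)) ^ (j'-1)))) *
        (k*x/(d*n)) ^ (j-1))
      + d * (1 - k*x/n) ^ (k-1) *
          Real.exp (-(∑ j' ∈ Finset.Icc 2 ℓ, Δ j' * (k*x/(d*n)) ^ (j'-1))))
      / ((n/k) * (1 - k*x/n) * (d * (1 - k*x/n) ^ (k-1) *
          Real.exp (-(∑ j' ∈ Finset.Icc 2 ℓ, Δ j' * (k*x/(d*n)) ^ (j'-1)))))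
      ≤ 2 * k * Γ / (n * (1 - k*x/n)) := by
  have hk0 : (0 : ℝ) < k := by exact_mod_cast (by omega : 0 < k)
  set E := Real.exp (-(∑ j' ∈ Icc 2 ℓ, Δ j' * (k * x / (d * n)) ^ (j' - 1)))
  set P := 1 - k * x / n with hP
  have hkx : k * x / n ≤ 1 - μ := by
    rw [div_le_iff₀ hn]
    rwa [le_div_iff₀ hk0, mul_comm x] at hx'
  have hP0 : 0 < P := by linarith
  have hP1 : P ≤ 1 := by
    have : 0 ≤ k * x / n := by positivity
    linarith
  have hpM : k * x / (d * n) = (1 - P) / d := by rw [hP, sub_sub_cancel, div_div, mul_comm n d]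
  have hsum_c : ∑ j ∈ Icc 1 (ℓ - 1), Δ (j + 1) * j * (P ^ k * E) * (k * x / (d * n)) ^ (j - 1)
      = P ^ (k - 1) * E * ∑ j ∈ Icc 1 (ℓ - 1), Δ (j + 1) * j * P * ((1 - P) / d) ^ (j - 1) := by
    rw [mul_sum, hpM, ← Nat.sub_add_cancel (by omega : 1 ≤ k)]
    refine sum_congr rfl fun j _ ↦ ?_
    simp only [Nat.add_sub_cancel, pow_succ]
    ring
  rw [hsum_c, mul_assoc d]
  exact add_div_le_of_le_mul hΓ hd hn hk0 hP0 (by positivity)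
    (sum_mul_natCast_mul_pow_pred_le hd hP0.le hP1 hΔ hsum)

theorem stmt_3 (k ℓ : ℕ) (hk : 2 ≤ k) (hℓ : 2 ≤ ℓ)
    (Γ d n μ x : ℝ) (hΓ : 1 ≤ Γ) (hd : 0 < d) (hn : 0 < n)
    (Δ : ℕ → ℝ) (hΔ : ∀ j ∈ Finset.Icc 2 ℓ, 0 ≤ Δ j)
    (hsum : ∑ j ∈ Finset.Icc 2 ℓ, Δ j / d ^ (j-1) ≤ Γ)
    (hμ : 0 < μ) (hμ1 : μ ≤ 1) (hx : 0 ≤ x) (hx' : x ≤ (1 - μ) * n / k) :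
    ((∑ j ∈ Finset.Icc 1 (ℓ-1), Δ (j+1) * (j : ℝ) *
        ((1 - k*x/n) ^ k *
          Real.exp (-(∑ j' ∈ Finset.Icc 2 ℓ, Δ j' * (k*x/(d*n)) ^ (j'-1)))) *
        (k*x/(d*n)) ^ (j-1))
      + d * (1 - k*x/n) ^ (k-1) *
          Real.exp (-(∑ j' ∈ Finset.Icc 2 ℓ, Δ j' * (k*x/(d*n)) ^ (j'-1))))
      / ((n/k) * (1 - k*x/n) * (d * (1 - k*x/n) ^ (k-1) *
          Real.exp (-(∑ j' ∈ Finset.Icc 2 ℓ, Δ j' * (k*x/(d*n)) ^ (j'-1)))))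
      ≤ 2 * k * Γ / (n * (1 - k*x/n)) :=
  stmt_3_general k ℓ hk Γ d n μ x hΓ hd hn Δ hΔ hsum hμ hx hx'
end

section
/- Let r ≥ 1, j ≥ 1, s ∈ [j]₀, and let X be a (d₀, 1/d)-spread j-uniform hypergraph with vertex set contained in a set E, with d ≥ 1 and, if s = 0, d₀ ≥ d^j. Define X_{j−s} := {(X, M) : X ∈ E(X), M ⊆ X, |M| = j−s}. Then ∑_{(X₁,M₁),…,(X_r,M_r) ∈ X_{j−s}} d^{−|M₁ ∪ ⋯ ∪ M_r|} ≤ (4ℓ r)^{2ℓ r} · d₀^r / d^{r(j−s)}, for any ℓ ≥ j, where the base case r = 1 gives ∑_{(X₁,M₁)} d^{−|M₁|} ≤ 4^ℓ · d₀/d^{j−s} and the inductive step multiplies by at most (4ℓr)^{2ℓ}·d₀/d^{j−s}. -/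
/-- A j-uniform hypergraph `X` (a collection of j-sets) is (d₀, δ)-spread if
every set of j' vertices, 0 ≤ j' ≤ j-1, is contained in at most δ^j'·d₀ edges. -/
def IsSpread {α : Type*} [DecidableEq α] (j : ℕ) (d₀ δ : ℝ)
    (X : Finset (Finset α)) : Prop :=
  ∀ j' : ℕ, j' ≤ j - 1 → ∀ E : Finset α, E.card = j' →
    ((X.filter (fun x => E ⊆ x)).card : ℝ) ≤ δ ^ j' * d₀

/-!
The sum over `r`-tuples is bounded one coordinate at a time. Once the other pairs are fixed,
with union `M` of size at most `ℓ r`, a further pair `(x, m)` contributes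
`d^{-|m ∪ M|} = d^{|m ∩ M|} / d^{(j-s) + |M|}`. Grouping the pairs by `N = m ∩ M`, a subset of
`M` of size at most `j - s`, a group has at most `binom(j, j-s) Δ_{|N|}(X)` members, and
spreadness gives `Δ_{|N|}(X) d^{|N|} ≤ d₀`; when `|N| = j` the only edge containing `N` is `N`,
and `d^j ≤ d₀` is assumed instead. Since `M` has at most `(ℓ+1)(ℓr)^ℓ` such subsets, each
coordinate costs a factor of at most `(4ℓr)^{2ℓ} d₀ / d^{j-s}`.
-/

open Finset

section

variable {α : Type*} [DecidableEq α]

lemma card_powerset_filter_card_le_le {M : Finset α} {t L : ℕ} (hM : #M ≤ L) (hL : 1 ≤ L) :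
    #{N ∈ M.powerset | #N ≤ t} ≤ (t + 1) * L ^ t := by
  have hsub : {N ∈ M.powerset | #N ≤ t} ⊆ (range (t + 1)).biUnion (M.powersetCard ·) := by
    intro N hN
    rw [mem_filter, mem_powerset] at hN
    exact mem_biUnion.2 ⟨#N, mem_range.2 (by omega), mem_powersetCard.2 ⟨hN.1, rfl⟩⟩
  calc #{N ∈ M.powerset | #N ≤ t}
      ≤ ∑ k ∈ range (t + 1), #(M.powersetCard k) := (card_le_card hsub).trans card_biUnion_le
    _ ≤ ∑ _k ∈ range (t + 1), L ^ t := by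
        refine sum_le_sum fun k hk => ?_
        rw [card_powersetCard]
        calc (#M).choose k ≤ #M ^ k := Nat.choose_le_pow _ _
          _ ≤ L ^ k := Nat.pow_le_pow_left hM k
          _ ≤ L ^ t := Nat.pow_le_pow_right hL (by simpa [Nat.lt_succ_iff] using hk)
    _ = (t + 1) * L ^ t := by rw [sum_const, card_range, smul_eq_mul]

lemma card_powerset_filter_card_le_mul_choose_le {M : Finset α} {t j ℓ n : ℕ} (hM : #M ≤ n)
    (hn : 1 ≤ n) (ht : t ≤ j) (hj : j ≤ ℓ) :
    #{N ∈ M.powerset | #N ≤ t} * j.choose t ≤ (4 * n) ^ ℓ := by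
  have h₁ : t + 1 ≤ 2 ^ ℓ := Nat.lt_two_pow_self.trans_le (Nat.pow_le_pow_right two_pos (by omega))
  have h₂ : n ^ t ≤ n ^ ℓ := Nat.pow_le_pow_right hn (by omega)
  have h₃ : j.choose t ≤ 2 ^ ℓ := (Nat.choose_le_two_pow j t).trans (Nat.pow_le_pow_right two_pos hj)
  calc #{N ∈ M.powerset | #N ≤ t} * j.choose t ≤ (t + 1) * n ^ t * j.choose t := by
        gcongr
        exact card_powerset_filter_card_le_le hM hn
    _ ≤ 2 ^ ℓ * n ^ ℓ * 2 ^ ℓ := by gcongr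
    _ = (4 * n) ^ ℓ := by rw [mul_pow, show (4 : ℕ) = 2 * 2 by rfl, mul_pow]; ring

lemma IsSpread.card_filter_subset_mul_pow_le {j : ℕ} {d₀ d : ℝ} {X : Finset (Finset α)}
    (hspread : IsSpread j d₀ (1 / d) X) (hX : ∀ x ∈ X, #x = j) (hd : 0 < d)
    {N : Finset α} (hN : #N ≤ j) (htop : #N = j → d ^ j ≤ d₀) :
    (#{x ∈ X | N ⊆ x} : ℝ) * d ^ #N ≤ d₀ := by
  rcases hN.lt_or_eq with hlt | heq
  · calc (#{x ∈ X | N ⊆ x} : ℝ) * d ^ #N ≤ (1 / d) ^ #N * d₀ * d ^ #N := by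
          gcongr
          exact hspread _ (by omega) N rfl
      _ = d₀ := by
          rw [one_div, inv_pow, mul_right_comm, inv_mul_cancel₀ (by positivity), one_mul]
  · have hle : #{x ∈ X | N ⊆ x} ≤ 1 := by
      refine card_le_one.2 fun x hx y hy => ?_
      rw [mem_filter] at hx hy
      rw [← eq_of_subset_of_card_le hx.2 (by rw [hX x hx.1, heq]),
        ← eq_of_subset_of_card_le hy.2 (by rw [hX y hy.1, heq])]
    calc (#{x ∈ X | N ⊆ x} : ℝ) * d ^ #N ≤ 1 * d ^ j := by
          rw [heq]
          gcongr
          exact_mod_cast hle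
      _ ≤ d₀ := by rw [one_mul]; exact htop heq

lemma sum_piFinset_one_div_pow_card_biUnion_le {ι : Type*} (P : Finset ι) (m : ι → Finset α)
    {t : ℕ} (hm : ∀ p ∈ P, #(m p) ≤ t) {d B : ℝ} (hB : 0 ≤ B) (k : ℕ)
    (hstep : ∀ M : Finset α, #M ≤ k * t → ∑ p ∈ P, 1 / d ^ #(m p ∪ M) ≤ B / d ^ #M) :
    ∑ g ∈ Fintype.piFinset (fun _ : Fin k => P), 1 / d ^ #(univ.biUnion fun i => m (g i))
      ≤ B ^ k := by
  induction k with
  | zero => simp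
  | succ k ih =>
    have hpi : Fintype.piFinset (fun _ : Fin (k + 1) => P)
        = (P ×ˢ Fintype.piFinset (fun _ : Fin k => P)).map (Fin.consEquiv _).toEmbedding := by
      have := filter_piFinset_eq_map_consEquiv (fun _ : Fin (k + 1) => P) (fun _ => True)
      rw [filter_true, filter_true] at this
      exact this
    have hunion : ∀ p (g : Fin k → ι), (univ.biUnion fun i => m (Fin.cons p g i : ι))
        = m p ∪ univ.biUnion fun i => m (g i) := by
      intro p g
      ext a
      simp [Fin.exists_fin_succ]
    have hcard : ∀ g ∈ Fintype.piFinset (fun _ : Fin k => P),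
        #(univ.biUnion fun i => m (g i)) ≤ (k + 1) * t := by
      intro g hg
      calc #(univ.biUnion fun i => m (g i)) ≤ ∑ i, #(m (g i)) := card_biUnion_le
        _ ≤ ∑ _i : Fin k, t := sum_le_sum fun i _ => hm _ (Fintype.mem_piFinset.1 hg i)
        _ ≤ (k + 1) * t := by
          rw [sum_const, card_univ, Fintype.card_fin, smul_eq_mul]
          exact Nat.mul_le_mul_right t k.le_succ
    calc ∑ g ∈ Fintype.piFinset (fun _ : Fin (k + 1) => P),
          1 / d ^ #(univ.biUnion fun i => m (g i))
        = ∑ g ∈ Fintype.piFinset (fun _ : Fin k => P),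
            ∑ p ∈ P, 1 / d ^ #(m p ∪ univ.biUnion fun i => m (g i)) := by
          rw [hpi, sum_map, sum_product, sum_comm]
          simp [hunion]
      _ ≤ ∑ g ∈ Fintype.piFinset (fun _ : Fin k => P),
            B * (1 / d ^ #(univ.biUnion fun i => m (g i))) := by
          refine sum_le_sum fun g hg => ?_
          rw [mul_one_div]
          exact hstep _ (hcard g hg)
      _ ≤ B * B ^ k := by
          rw [← mul_sum]
          exact mul_le_mul_of_nonneg_left
            (ih fun M hM => hstep M (hM.trans (Nat.mul_le_mul_right _ k.le_succ))) hB
      _ = B ^ (k + 1) := (pow_succ' B k).symm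

section SubsetPairs

variable [Fintype α]

/-- The paper's `X_t`: an edge of `X` together with a marked `t`-subset of it. -/
def subsetPairs (X : Finset (Finset α)) (t : ℕ) : Finset (Finset α × Finset α) :=
  (X ×ˢ univ).filter fun p => p.2 ⊆ p.1 ∧ p.2.card = t

lemma mem_subsetPairs {X : Finset (Finset α)} {t : ℕ} {p : Finset α × Finset α} :
    p ∈ subsetPairs X t ↔ p.1 ∈ X ∧ p.2 ∈ p.1.powersetCard t := by
  simp [subsetPairs]

lemma card_subsetPairs {X : Finset (Finset α)} {j : ℕ} (hX : ∀ x ∈ X, #x = j) (t : ℕ) :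
    #(subsetPairs X t) = #X * j.choose t := by
  rw [card_eq_sum_ones, sum_finset_product _ X _ fun _ => mem_subsetPairs]
  simp +contextual [hX]

variable {j t : ℕ} {d₀ d : ℝ} {X : Finset (Finset α)}

lemma card_subsetPairs_filter_inter_eq_le (hX : ∀ x ∈ X, #x = j) (M N : Finset α) :
    #{p ∈ subsetPairs X t | p.2 ∩ M = N} ≤ #{x ∈ X | N ⊆ x} * j.choose t := by
  have hsub : {p ∈ subsetPairs X t | p.2 ∩ M = N} ⊆ subsetPairs {x ∈ X | N ⊆ x} t := by
    intro p hpN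
    obtain ⟨hp, rfl⟩ := mem_filter.1 hpN
    obtain ⟨hx, hm⟩ := mem_subsetPairs.1 hp
    exact mem_subsetPairs.2
      ⟨mem_filter.2 ⟨hx, inter_subset_left.trans (mem_powersetCard.1 hm).1⟩, hm⟩
  exact (card_le_card hsub).trans (card_subsetPairs (fun x hx => hX x (mem_filter.1 hx).1) t).le

lemma sum_pow_card_inter_le (hspread : IsSpread j d₀ (1 / d) X) (hX : ∀ x ∈ X, #x = j)
    (hd : 0 < d) (ht : t ≤ j) (htop : t = j → d ^ j ≤ d₀) (M : Finset α) :
    ∑ p ∈ subsetPairs X t, d ^ #(p.2 ∩ M)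
      ≤ #{N ∈ M.powerset | #N ≤ t} * j.choose t * d₀ := by
  have hmaps : ∀ p ∈ subsetPairs X t, p.2 ∩ M ∈ {N ∈ M.powerset | #N ≤ t} := by
    intro p hp
    have hp := mem_powersetCard.1 (mem_subsetPairs.1 hp).2
    exact mem_filter.2 ⟨mem_powerset.2 inter_subset_right,
      hp.2 ▸ card_le_card inter_subset_left⟩
  have hfiber : ∀ N ∈ {N ∈ M.powerset | #N ≤ t},
      ∑ p ∈ subsetPairs X t with p.2 ∩ M = N, d ^ #(p.2 ∩ M) ≤ j.choose t * d₀ := by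
    intro N hN
    have hN := (mem_filter.1 hN).2
    calc ∑ p ∈ subsetPairs X t with p.2 ∩ M = N, d ^ #(p.2 ∩ M)
        = #{p ∈ subsetPairs X t | p.2 ∩ M = N} * d ^ #N := by
          rw [sum_congr rfl fun p hp => by rw [(mem_filter.1 hp).2], sum_const, nsmul_eq_mul]
      _ ≤ (#{x ∈ X | N ⊆ x} * j.choose t : ℕ) * d ^ #N := by
          gcongr
          exact card_subsetPairs_filter_inter_eq_le hX M N
      _ = j.choose t * ((#{x ∈ X | N ⊆ x} : ℝ) * d ^ #N) := by push_cast; ring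
      _ ≤ j.choose t * d₀ := by
          gcongr
          exact hspread.card_filter_subset_mul_pow_le hX hd (by omega) fun h => htop (by omega)
  rw [← sum_fiberwise_of_maps_to hmaps]
  calc ∑ N ∈ M.powerset with #N ≤ t, ∑ p ∈ subsetPairs X t with p.2 ∩ M = N, d ^ #(p.2 ∩ M)
      ≤ ∑ _N ∈ {N ∈ M.powerset | #N ≤ t}, (j.choose t * d₀ : ℝ) := sum_le_sum hfiber
    _ = #{N ∈ M.powerset | #N ≤ t} * j.choose t * d₀ := by
        rw [sum_const, nsmul_eq_mul, mul_assoc]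

lemma sum_one_div_pow_card_union_le (hspread : IsSpread j d₀ (1 / d) X) (hX : ∀ x ∈ X, #x = j)
    (hd : 0 < d) (ht : t ≤ j) (htop : t = j → d ^ j ≤ d₀) (M : Finset α) :
    ∑ p ∈ subsetPairs X t, 1 / d ^ #(p.2 ∪ M)
      ≤ #{N ∈ M.powerset | #N ≤ t} * j.choose t * d₀ / d ^ t / d ^ #M := by
  have hterm : ∀ p ∈ subsetPairs X t, 1 / d ^ #(p.2 ∪ M) = d ^ #(p.2 ∩ M) / d ^ (t + #M) := by
    intro p hp
    have hcard := card_union_add_card_inter p.2 M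
    rw [(mem_powersetCard.1 (mem_subsetPairs.1 hp).2).2] at hcard
    rw [div_eq_div_iff (by positivity) (by positivity), one_mul, ← pow_add, ← hcard, add_comm]
  calc ∑ p ∈ subsetPairs X t, 1 / d ^ #(p.2 ∪ M)
      = (∑ p ∈ subsetPairs X t, d ^ #(p.2 ∩ M)) / d ^ (t + #M) := by
        rw [sum_congr rfl hterm, sum_div]
    _ ≤ #{N ∈ M.powerset | #N ≤ t} * j.choose t * d₀ / d ^ (t + #M) := by
        gcongr
        exact sum_pow_card_inter_le hspread hX hd ht htop M
    _ = _ := by rw [pow_add, div_div]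

end SubsetPairs

end

open Finset in
theorem stmt_18_general {α : Type*} [DecidableEq α] [Fintype α]
    (r j s ℓ : ℕ) (hr : 1 ≤ r) (hj : 1 ≤ j) (hℓ : j ≤ ℓ)
    (d₀ d : ℝ) (hd₀ : 0 ≤ d₀) (hd : 1 ≤ d)
    (X : Finset (Finset α)) (hunif : ∀ x ∈ X, x.card = j)
    (hspread : IsSpread j d₀ (1 / d) X)
    (hs0 : s = 0 → d ^ j ≤ d₀) :
    ∑ g ∈ Fintype.piFinset (fun _ : Fin r =>
        (X ×ˢ (Finset.univ : Finset (Finset α))).filter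
          (fun p => p.2 ⊆ p.1 ∧ p.2.card = j - s)),
      1 / d ^ (Finset.univ.biUnion (fun i : Fin r => (g i).2)).card
    ≤ (4 * ℓ * r : ℝ) ^ (2 * ℓ * r) * d₀ ^ r / d ^ (r * (j - s)) := by
  have hd0 : 0 < d := by linarith
  have hℓr : 1 ≤ ℓ * r := Nat.mul_pos (by omega) hr
  set B : ℝ := (4 * ℓ * r : ℝ) ^ (2 * ℓ) * d₀ / d ^ (j - s) with hB
  have hstep : ∀ M : Finset α, #M ≤ r * (j - s) →
      ∑ p ∈ subsetPairs X (j - s), 1 / d ^ #(p.2 ∪ M) ≤ B / d ^ #M := by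
    intro M hM
    have hcount : #{N ∈ M.powerset | #N ≤ j - s} * j.choose (j - s) ≤ (4 * ℓ * r) ^ (2 * ℓ) := by
      simpa only [mul_assoc] using card_powerset_filter_card_le_mul_choose_le
        (hM.trans (by nlinarith [Nat.sub_le j s])) hℓr (Nat.sub_le j s) (by omega)
    refine (sum_one_div_pow_card_union_le hspread hunif hd0 (Nat.sub_le j s)
      (fun h => hs0 (by omega)) M).trans ?_
    rw [hB]
    gcongr
    exact_mod_cast hcount
  calc _ ≤ B ^ r :=
        sum_piFinset_one_div_pow_card_biUnion_le (subsetPairs X (j - s)) Prod.snd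
          (fun p hp => (mem_powersetCard.1 (mem_subsetPairs.1 hp).2).2.le) (by positivity) r hstep
    _ = _ := by rw [hB, div_pow, mul_pow, ← pow_mul, ← pow_mul, mul_comm (j - s)]

open Finset in
theorem stmt_18 {α : Type*} [DecidableEq α] [Fintype α]
    (r j s ℓ : ℕ) (hr : 1 ≤ r) (hj : 1 ≤ j) (hs : s ≤ j) (hℓ : j ≤ ℓ)
    (d₀ d : ℝ) (hd₀ : 0 ≤ d₀) (hd : 1 ≤ d)
    (X : Finset (Finset α)) (hunif : ∀ x ∈ X, x.card = j)
    (hspread : IsSpread j d₀ (1 / d) X)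
    (hs0 : s = 0 → d ^ j ≤ d₀) :
    ∑ g ∈ Fintype.piFinset (fun _ : Fin r =>
        (X ×ˢ (Finset.univ : Finset (Finset α))).filter
          (fun p => p.2 ⊆ p.1 ∧ p.2.card = j - s)),
      1 / d ^ (Finset.univ.biUnion (fun i : Fin r => (g i).2)).card
    ≤ (4 * ℓ * r : ℝ) ^ (2 * ℓ * r) * d₀ ^ r / d ^ (r * (j - s)) :=
  stmt_18_general r j s ℓ hr hj hℓ d₀ d hd₀ hd X hunif hspread hs0
end
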